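/- De Morgan laws hold: for all α, β ∈ Ĩ, ¬(α ∧ β) = (¬α) ∨ (¬β) and ¬(α ∨ β) = (¬α) ∧ (¬β), where ∧ and ∨ denote binary minimum and maximum with respect to the linear order ≤_XY. -/
import Mathlib


/-- The set of intuitionistic fuzzy values Ĩ = {⟨μ,ν⟩ ∈ [0,1]² : μ + ν ≤ 1}. -/
def IFV : Set (ℝ × ℝ) :=
  {p | 0 ≤ p.1 ∧ p.1 ≤ 1 ∧ 0 ≤ p.2 ∧ p.2 ≤ 1 ∧ p.1 + p.2 ≤ 1}

/-- Score function s(α) = μ_α − ν_α. -/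
def sc (p : ℝ × ℝ) : ℝ := p.1 - p.2

/-- Accuracy function h(α) = μ_α + ν_α. -/
def ac (p : ℝ × ℝ) : ℝ := p.1 + p.2

/-- Strict Xu–Yager order. -/
def ltXY (a b : ℝ × ℝ) : Prop := sc a < sc b ∨ (sc a = sc b ∧ ac a < ac b)

/-- Nonstrict Xu–Yager order. -/
def leXY (a b : ℝ × ℝ) : Prop := sc a < sc b ∨ (sc a = sc b ∧ ac a ≤ ac b)

/-- The strong negation ¬α on IFVs. -/
noncomputable def negIFV (p : ℝ × ℝ) : ℝ × ℝ :=
  if p.2 < p.1 then ((1 - p.1 - p.2) / 2, (1 + p.1 - 3 * p.2) / 2)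
  else if p.1 = p.2 then (1 / 2 - p.1, 1 / 2 - p.2)
  else ((1 + p.2 - 3 * p.1) / 2, (1 - p.1 - p.2) / 2)

open Classical in
/-- Binary minimum with respect to ≤_XY. -/
noncomputable def minXY (a b : ℝ × ℝ) : ℝ × ℝ := if leXY a b then a else b

open Classical in
/-- Binary maximum with respect to ≤_XY. -/
noncomputable def maxXY (a b : ℝ × ℝ) : ℝ × ℝ := if leXY a b then b else a

lemma sc_neg (p : ℝ × ℝ) : sc (negIFV p) = - sc p := by
  unfold negIFV sc
  split_ifs with h1 h2 <;> simp <;> ring_nf <;> linarith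

lemma ac_neg (p : ℝ × ℝ) : ac (negIFV p) = 1 - ac p + |sc p| := by
  unfold negIFV ac sc
  split_ifs with h1 h2
  · rw [abs_of_pos (by linarith : (0:ℝ) < p.1 - p.2)]; simp; ring
  · rw [h2]; simp; ring
  · have h : p.1 < p.2 := lt_of_le_of_ne (not_lt.mp h1) h2
    rw [abs_of_neg (by linarith : p.1 - p.2 < 0)]; simp; ring

lemma le_neg_iff (a b : ℝ × ℝ) : leXY (negIFV a) (negIFV b) ↔ leXY b a := by
  unfold leXY
  rw [sc_neg, sc_neg, ac_neg, ac_neg]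
  constructor
  · rintro (h | ⟨h1, h2⟩)
    · exact Or.inl (by linarith)
    · have hs : sc b = sc a := by linarith
      refine Or.inr ⟨hs, ?_⟩
      rw [hs] at h2; linarith
  · rintro (h | ⟨h1, h2⟩)
    · exact Or.inl (by linarith)
    · refine Or.inr ⟨by linarith, ?_⟩
      rw [h1]; linarith

lemma eq_of_le_le {a b : ℝ × ℝ} (h1 : leXY a b) (h2 : leXY b a) : a = b := by
  unfold leXY sc ac at h1 h2
  rcases h1 with h | ⟨hs, hh⟩ <;> rcases h2 with h' | ⟨hs', hh'⟩ <;>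
    first
      | linarith
      | (exact Prod.ext (by linarith) (by linarith))

lemma leXY_total (a b : ℝ × ℝ) : leXY a b ∨ leXY b a := by
  unfold leXY
  rcases lt_trichotomy (sc a) (sc b) with h | h | h
  · exact Or.inl (Or.inl h)
  · rcases le_total (ac a) (ac b) with h' | h'
    · exact Or.inl (Or.inr ⟨h, h'⟩)
    · exact Or.inr (Or.inr ⟨h.symm, h'⟩)
  · exact Or.inr (Or.inl h)

/-- De Morgan laws for ¬ with respect to the binary minimum and maximum
under ≤_XY. -/
theorem negIFV_deMorgan (a : ℝ × ℝ) (ha : a ∈ IFV) (b : ℝ × ℝ) (hb : b ∈ IFV) :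
    negIFV (minXY a b) = maxXY (negIFV a) (negIFV b) ∧
    negIFV (maxXY a b) = minXY (negIFV a) (negIFV b) := by
  classical
  unfold minXY maxXY
  constructor
  · split_ifs with h1 h2 h3
    · rw [eq_of_le_le h1 ((le_neg_iff a b).mp h2)]
    · rfl
    · rfl
    · exact absurd ((le_neg_iff b a).mp ((leXY_total _ _).resolve_left h3)) h1
  · split_ifs with h1 h2 h3
    · rw [eq_of_le_le h1 ((le_neg_iff a b).mp h2)]
    · rfl
    · rfl
    · exact absurd ((le_neg_iff b a).mp ((leXY_total _ _).resolve_left h3)) h1
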